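/- arXiv:0905.1064 — 2 statements merged into one kernel-verified Lean document; each statement's English description precedes it below -/
import Mathlib

section
/- Let G be an edge-minimal, k-edge-connected multigraph. Then G has at least two vertices of degree exactly k. -/
/-- A multigraph on vertex type `V` with edge type `E`: each edge is assigned
an unordered pair of endpoints (parallel edges and loops are allowed). -/
structure Multigraph (V : Type) (E : Type) where
  ends : E → Sym2 V

namespace Multigraph

variable {V E : Type}

/-- Walks in a multigraph, recorded as the sequence of traversed edges. -/
inductive Walk (G : Multigraph V E) : V → V → Type
  | nil (v : V) : Walk G v v
  | cons {u v w : V} (e : E) (he : G.ends e = s(u, v)) (p : Walk G v w) : Walk G u w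

/-- The list of edges traversed by a walk. -/
def Walk.edges {G : Multigraph V E} : ∀ {u v : V}, G.Walk u v → List E
  | _, _, .nil _ => []
  | _, _, .cons e _ p => e :: p.edges

/-- The list of vertices visited by a walk, in order. -/
def Walk.support {G : Multigraph V E} : ∀ {u v : V}, G.Walk u v → List V
  | _, _, .nil v => [v]
  | u, _, .cons _ _ p => u :: p.support

/-- A path is a walk visiting no vertex twice. -/
def Walk.IsPath {G : Multigraph V E} {u v : V} (p : G.Walk u v) : Prop :=
  p.support.Nodup

/-- There exist `k` pairwise edge-disjoint `u`–`v` paths in `G`. -/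
def HasEdgeDisjointPaths (G : Multigraph V E) (k : ℕ) (u v : V) : Prop :=
  ∃ f : Fin k → G.Walk u v, (∀ i, (f i).IsPath) ∧
    ∀ i j, i ≠ j → ∀ e, e ∈ (f i).edges → e ∉ (f j).edges

/-- `G` is `k`-edge-connected: it has more than one vertex and any two distinct
vertices are joined by at least `k` pairwise edge-disjoint paths. -/
def EdgeConnected (G : Multigraph V E) (k : ℕ) : Prop :=
  (∃ u v : V, u ≠ v) ∧ ∀ u v : V, u ≠ v → G.HasEdgeDisjointPaths k u v

/-- Deletion of the edge `e₀`. -/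
def deleteEdge (G : Multigraph V E) (e₀ : E) : Multigraph V {e : E // e ≠ e₀} :=
  ⟨fun e => G.ends e.1⟩

/-- `G` is an edge-minimal `k`-edge-connected multigraph. -/
def EdgeMinimal (G : Multigraph V E) (k : ℕ) : Prop :=
  G.EdgeConnected k ∧ ∀ e₀ : E, ¬ (G.deleteEdge e₀).EdgeConnected k

/-- The unordered pair of endpoints of an edge, as a multiset. -/
def _root_.Sym2.toMset {α : Type*} : Sym2 α → Multiset α :=
  Sym2.lift ⟨fun a b => {a, b}, fun a b => Multiset.cons_swap a b 0⟩

open Classical in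
/-- The degree of a vertex: the number of edge-endpoints at `v`, counting
parallel edges with multiplicity (and loops twice). -/
noncomputable def degree (G : Multigraph V E) [Fintype E] (v : V) : ℕ :=
  ∑ e : E, Multiset.count v (G.ends e).toMset

/-- The relation `R^k`: `v₁ R^k v₂` iff `v₁ = v₂` or there are `k` pairwise
edge-disjoint paths between `v₁` and `v₂`. -/
def Rel (G : Multigraph V E) (k : ℕ) (v₁ v₂ : V) : Prop :=
  v₁ = v₂ ∨ G.HasEdgeDisjointPaths k v₁ v₂

end Multigraph

/-!
By Menger's theorem, an edge `e` of an edge-minimal `k`-edge-connected graph `G` lies in a cut of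
`G - e` with fewer than `k` edges, so `e` lies in a *tight* set `S`: one whose cut `δ(S)` has
exactly `k` edges. In particular `G` has no loops, and the degree of `x` is `|δ({x})|`.

It remains to show that every nonempty tight set contains a tight singleton; applied to a tight
set and to the complement of the tight singleton found in it, this gives two vertices of degree
`k`. A tight set `S` with two vertices contains an edge, since each of the `k` edge-disjoint
paths between them would otherwise cross `δ(S)` twice. A tight set `T` through that edge
crosses `S`, and by posimodularity, `|δ(S \ T)| + |δ(T \ S)| ≤ |δ(S)| + |δ(T)|`, either
`T ⊂ S` or `S \ T` is a smaller nonempty tight subset of `S`.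

Menger's theorem itself is proved by augmenting unit-capacity flows along residual paths.
-/

open Finset
open scoped Classical

namespace Multigraph

variable {V E : Type} {G : Multigraph V E}

namespace Walk

def darts : ∀ {u v : V}, G.Walk u v → List (E × V × V)
  | _, _, .nil _ => []
  | u, _, .cons (v := v) e _ p => (e, u, v) :: p.darts

lemma edges_eq_map_darts : ∀ {u v : V} (p : G.Walk u v), p.edges = p.darts.map Prod.fst
  | _, _, .nil _ => rfl
  | _, _, .cons _ _ p => by simp [edges, darts, p.edges_eq_map_darts]

lemma start_mem_support : ∀ {u v : V} (p : G.Walk u v), u ∈ p.support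
  | _, _, .nil _ => by simp [support]
  | _, _, .cons _ _ _ => by simp [support]

lemma isPath_cons {u v w : V} {e : E} (he : G.ends e = s(u, v)) (p : G.Walk v w) :
    (Walk.cons e he p).IsPath ↔ u ∉ p.support ∧ p.IsPath := by
  simp [IsPath, support]

lemma left_mem_support_of_mem_edges : ∀ {u v x y : V} (p : G.Walk u v) {e : E},
    e ∈ p.edges → G.ends e = s(x, y) → x ∈ p.support
  | _, _, _, _, .cons e' he' p, e, hmem, hends => by
    simp only [edges, List.mem_cons] at hmem
    simp only [support, List.mem_cons]
    rcases hmem with rfl | hmem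
    · rcases Sym2.eq_iff.1 (hends.symm.trans he') with ⟨rfl, -⟩ | ⟨rfl, -⟩
      · exact Or.inl rfl
      · exact Or.inr p.start_mem_support
    · exact Or.inr (p.left_mem_support_of_mem_edges hmem hends)

lemma IsPath.edges_nodup : ∀ {u v : V} {p : G.Walk u v}, p.IsPath → p.edges.Nodup
  | _, _, .nil _, _ => by simp [edges]
  | _, _, .cons _ he p, hp => by
    rw [isPath_cons] at hp
    exact List.nodup_cons.2
      ⟨fun hmem => hp.1 (p.left_mem_support_of_mem_edges hmem he), hp.2.edges_nodup⟩

lemma IsPath.exists_suffix : ∀ {v w : V} {q : G.Walk v w}, q.IsPath → ∀ x ∈ q.support,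
    ∃ r : G.Walk x w, r.IsPath ∧ r.darts ⊆ q.darts
  | _, _, .nil _, hq, x, hx => by
    obtain rfl : x = _ := by simpa [support] using hx
    exact ⟨_, hq, List.Subset.refl _⟩
  | v, _, .cons e he p, hq, x, hx => by
    by_cases hxv : x = v
    · subst hxv
      exact ⟨_, hq, List.Subset.refl _⟩
    · rw [isPath_cons] at hq
      have hxp : x ∈ p.support := by simpa [support, hxv] using hx
      obtain ⟨r, hr, hrq⟩ := hq.2.exists_suffix x hxp
      exact ⟨r, hr, List.Subset.trans hrq (List.subset_cons_self _ _)⟩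

lemma exists_isPath_darts_subset : ∀ {u w : V} (p : G.Walk u w),
    ∃ q : G.Walk u w, q.IsPath ∧ q.darts ⊆ p.darts
  | _, _, .nil v => ⟨.nil v, by simp [IsPath, support], List.Subset.refl _⟩
  | u, _, .cons e he p => by
    obtain ⟨q, hq, hqp⟩ := p.exists_isPath_darts_subset
    by_cases hu : u ∈ q.support
    · obtain ⟨r, hr, hrq⟩ := hq.exists_suffix u hu
      exact ⟨r, hr, List.Subset.trans (List.Subset.trans hrq hqp) (List.subset_cons_self _ _)⟩
    · refine ⟨.cons e he q, (isPath_cons he q).2 ⟨hu, hq⟩, ?_⟩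
      simpa [darts] using List.cons_subset_cons _ hqp

lemma edges_subset_of_darts_subset {u v u' v' : V} {p : G.Walk u v} {q : G.Walk u' v'}
    (h : q.darts ⊆ p.darts) : q.edges ⊆ p.edges := by
  rw [edges_eq_map_darts, edges_eq_map_darts]
  exact List.map_subset _ h

end Walk

lemma hasEdgeDisjointPaths_of_walks {k : ℕ} {u v : V} (f : Fin k → G.Walk u v)
    (hf : ∀ i j, i ≠ j → ∀ e, e ∈ (f i).edges → e ∉ (f j).edges) :
    G.HasEdgeDisjointPaths k u v := by
  choose g hg hgf using fun i => (f i).exists_isPath_darts_subset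
  exact ⟨g, hg, fun i j hij e hi hj => hf i j hij e (Walk.edges_subset_of_darts_subset (hgf i) hi)
    (Walk.edges_subset_of_darts_subset (hgf j) hj)⟩

section Cut

def Crosses (G : Multigraph V E) (S : Finset V) (e : E) : Prop :=
  ∃ x ∈ S, ∃ y ∉ S, G.ends e = s(x, y)

noncomputable def cut [Fintype E] (G : Multigraph V E) (S : Finset V) : Finset E :=
  univ.filter (G.Crosses S)

variable {S : Finset V} {e : E}

lemma exists_ends (G : Multigraph V E) (e : E) : ∃ x y, G.ends e = s(x, y) :=
  Sym2.ind (fun x y => ⟨x, y, rfl⟩) (G.ends e)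

lemma crosses_iff {x y : V} (h : G.ends e = s(x, y)) : G.Crosses S e ↔ ¬(x ∈ S ↔ y ∈ S) := by
  constructor
  · rintro ⟨a, ha, b, hb, hab⟩
    rcases Sym2.eq_iff.1 (h.symm.trans hab) with ⟨rfl, rfl⟩ | ⟨rfl, rfl⟩ <;> tauto
  · intro hxy
    by_cases hx : x ∈ S
    · exact ⟨x, hx, y, by tauto, h⟩
    · exact ⟨y, by tauto, x, hx, by rw [h, Sym2.eq_swap]⟩

variable [Fintype E]

lemma mem_cut : e ∈ G.cut S ↔ G.Crosses S e := by
  simp [cut]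

lemma cut_compl [Fintype V] (S : Finset V) : G.cut Sᶜ = G.cut S := by
  ext e
  obtain ⟨x, y, h⟩ := G.exists_ends e
  simp only [mem_cut, crosses_iff h, mem_compl]
  tauto

lemma Walk.exists_mem_edges_mem_cut : ∀ {u v : V} (p : G.Walk u v), u ∈ S → v ∉ S →
    ∃ e ∈ p.edges, e ∈ G.cut S
  | _, _, .nil _, hu, hv => absurd hu hv
  | _, _, .cons (v := m) e he p, hu, hv => by
    by_cases hm : m ∈ S
    · obtain ⟨e', h, h'⟩ := p.exists_mem_edges_mem_cut hm hv
      exact ⟨e', by simp [Walk.edges, h], h'⟩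
    · exact ⟨e, by simp [Walk.edges], mem_cut.2 ⟨_, hu, _, hm, he⟩⟩

lemma Walk.IsPath.one_lt_card_edges_inter_cut [Fintype V] {a b : V} {p : G.Walk a b}
    (hp : p.IsPath) (ha : a ∈ S) (hb : b ∈ S) (hab : a ≠ b)
    (hS : ∀ e x y, G.ends e = s(x, y) → x ∈ S → y ∉ S) :
    1 < #(p.edges.toFinset ∩ G.cut S) := by
  cases p with
  | nil => exact absurd rfl hab
  | cons e he q =>
    have hm := hS e _ _ he ha
    obtain ⟨e', he'q, he'cut⟩ :=
      q.exists_mem_edges_mem_cut (S := Sᶜ) (mem_compl.2 hm) (by simpa using hb)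
    rw [cut_compl] at he'cut
    have hne : e ≠ e' := fun h => (List.nodup_cons.1 hp.edges_nodup).1 (h ▸ he'q)
    refine one_lt_card.2 ⟨e, ?_, e', ?_, hne⟩
    · simpa [Walk.edges] using mem_cut.2 ⟨_, ha, _, hm, he⟩
    · simpa [Walk.edges, he'q] using he'cut

lemma mul_le_card_cut {u v : V} {k n : ℕ} {f : Fin k → G.Walk u v}
    (hdisj : ∀ i j, i ≠ j → ∀ e, e ∈ (f i).edges → e ∉ (f j).edges)
    (hn : ∀ i, n ≤ #((f i).edges.toFinset ∩ G.cut S)) :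
    k * n ≤ #(G.cut S) := by
  have hpd : ∀ i ∈ (univ : Finset (Fin k)), ∀ j ∈ univ, i ≠ j →
      Disjoint ((f i).edges.toFinset ∩ G.cut S) ((f j).edges.toFinset ∩ G.cut S) :=
    fun i _ j _ hij => disjoint_left.2 fun e hi hj =>
      hdisj i j hij e (by simpa using (mem_inter.1 hi).1) (by simpa using (mem_inter.1 hj).1)
  calc k * n = ∑ _i : Fin k, n := by simp
    _ ≤ ∑ i, #((f i).edges.toFinset ∩ G.cut S) := sum_le_sum fun i _ => hn i
    _ = #(univ.biUnion fun i => (f i).edges.toFinset ∩ G.cut S) := (card_biUnion hpd).symm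
    _ ≤ #(G.cut S) := card_le_card (biUnion_subset.2 fun _ _ => inter_subset_right)

lemma le_card_cut_of_hasEdgeDisjointPaths {k : ℕ} {u v : V} (h : G.HasEdgeDisjointPaths k u v)
    (hu : u ∈ S) (hv : v ∉ S) : k ≤ #(G.cut S) := by
  obtain ⟨f, -, hdisj⟩ := h
  simpa using mul_le_card_cut (n := 1) hdisj fun i => by
    obtain ⟨e, he, hcut⟩ := (f i).exists_mem_edges_mem_cut hu hv
    exact one_le_card.2 ⟨e, mem_inter.2 ⟨by simpa using he, hcut⟩⟩

lemma EdgeConnected.le_card_cut {k : ℕ} (hG : G.EdgeConnected k) {x y : V} (hx : x ∈ S)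
    (hy : y ∉ S) : k ≤ #(G.cut S) :=
  le_card_cut_of_hasEdgeDisjointPaths (hG.2 x y fun h => hy (h ▸ hx)) hx hy

lemma card_cut_sdiff_add_card_cut_sdiff_le (A B : Finset V) :
    #(G.cut (A \ B)) + #(G.cut (B \ A)) ≤ #(G.cut A) + #(G.cut B) := by
  simp only [cut, card_filter, ← sum_add_distrib]
  refine sum_le_sum fun e _ => ?_
  obtain ⟨x, y, h⟩ := G.exists_ends e
  simp only [crosses_iff h, mem_sdiff]
  by_cases hxA : x ∈ A <;> by_cases hxB : x ∈ B <;> by_cases hyA : y ∈ A <;>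
    by_cases hyB : y ∈ B <;> simp [hxA, hxB, hyA, hyB]

lemma card_cut_deleteEdge (e₀ : E) (S : Finset V) :
    #((G.deleteEdge e₀).cut S) = #((G.cut S).erase e₀) := by
  rw [← card_map (Function.Embedding.subtype _)]
  congr 1
  ext e
  simp only [mem_map, mem_cut, Function.Embedding.coe_subtype, Subtype.exists, mem_erase,
    exists_and_right, exists_eq_right]
  exact ⟨fun ⟨h, hc⟩ => ⟨h, hc⟩, fun ⟨h, hc⟩ => ⟨h, hc⟩⟩

lemma degree_eq_card_cut_singleton (hloop : ∀ e x, G.ends e ≠ s(x, x)) (x : V) :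
    G.degree x = #(G.cut {x}) := by
  rw [degree, cut, card_filter]
  refine sum_congr rfl fun e _ => ?_
  obtain ⟨a, b, h⟩ := G.exists_ends e
  have hab : a ≠ b := fun hab => hloop e a (hab ▸ h)
  have hmset : (s(a, b)).toMset = {a, b} := rfl
  rw [crosses_iff h, h, hmset, Multiset.insert_eq_cons, Multiset.count_cons,
    Multiset.count_singleton]
  simp only [mem_singleton]
  by_cases hxa : x = a <;> by_cases hxb : x = b <;> simp_all [eq_comm]

end Cut

section Flow

/-- `F` is a flow of unit capacity: every edge is unused (`none`) or carries one unit of flow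
from `p` to `q` (`some (p, q)`). -/
def IsFlow (G : Multigraph V E) (F : E → Option (V × V)) : Prop :=
  ∀ e p q, F e = some (p, q) → G.ends e = s(p, q)

noncomputable def arcExcess : Option (V × V) → V → ℤ
  | none, _ => 0
  | some (p, q), x => (if x = p then 1 else 0) - (if x = q then 1 else 0)

@[simp] lemma arcExcess_none (x : V) : arcExcess none x = 0 := rfl

lemma arcExcess_self (p x : V) : arcExcess (some (p, p)) x = 0 := by
  simp [arcExcess]

lemma arcExcess_swap (p q x : V) : arcExcess (some (q, p)) x = -arcExcess (some (p, q)) x := by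
  simp [arcExcess]

lemma arcExcess_add_arcExcess (a b c x : V) :
    arcExcess (some (a, b)) x + arcExcess (some (b, c)) x = arcExcess (some (a, c)) x := by
  simp only [arcExcess]
  ring

lemma sum_arcExcess (p q : V) (S : Finset V) :
    ∑ x ∈ S, arcExcess (some (p, q)) x = (if p ∈ S then 1 else 0) - (if q ∈ S then 1 else 0) := by
  simp [arcExcess, sum_sub_distrib]

lemma nonneg_sub_arcExcess {c : V → ℤ} {a q v : V} (hnn : ∀ x ≠ v, 0 ≤ c x) (ha : 0 < c a) :
    (∀ x ≠ v, 0 ≤ c x - arcExcess (some (a, q)) x) ∧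
      (q ≠ v → 0 < c q - arcExcess (some (a, q)) q) := by
  refine ⟨fun x hx => ?_, fun hq => ?_⟩
  · have := hnn x hx
    by_cases hxa : x = a
    · subst hxa
      simp only [arcExcess, eq_self, if_true]
      split_ifs <;> omega
    · simp only [arcExcess, if_neg hxa]
      split_ifs <;> omega
  · by_cases hqa : q = a
    · rwa [hqa, arcExcess_self, sub_zero]
    · have := hnn q hq
      simp only [arcExcess, if_neg hqa, eq_self, if_true]
      omega

variable {F : E → Option (V × V)}

lemma IsFlow.update (hF : G.IsFlow F) {e : E} {o : Option (V × V)}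
    (ho : ∀ p q, o = some (p, q) → G.ends e = s(p, q)) : G.IsFlow (Function.update F e o) := by
  intro e' p q h
  by_cases he' : e' = e
  · subst he'
    exact ho p q (by simpa using h)
  · exact hF e' p q (by rwa [Function.update_of_ne he'] at h)

def ResidualArc (G : Multigraph V E) (F : E → Option (V × V)) (e : E) (a b : V) : Prop :=
  (F e = none ∧ G.ends e = s(a, b)) ∨ F e = some (b, a)

def ResidualAdj (G : Multigraph V E) (F : E → Option (V × V)) (a b : V) : Prop :=
  ∃ e, G.ResidualArc F e a b

lemma IsFlow.ends_of_residualArc (hF : G.IsFlow F) {e : E} {a b : V}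
    (h : G.ResidualArc F e a b) : G.ends e = s(a, b) := by
  rcases h with ⟨-, h⟩ | h
  · exact h
  · rw [hF e b a h, Sym2.eq_swap]

lemma IsFlow.exists_walk_of_reflTransGen (hF : G.IsFlow F) {a c : V}
    (h : Relation.ReflTransGen (G.ResidualAdj F) a c) :
    ∃ p : G.Walk a c, ∀ d ∈ p.darts, G.ResidualArc F d.1 d.2.1 d.2.2 := by
  induction h using Relation.ReflTransGen.head_induction_on with
  | refl => exact ⟨.nil c, by simp [Walk.darts]⟩
  | head hab _ ih =>
    obtain ⟨e, he⟩ := hab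
    obtain ⟨p, hp⟩ := ih
    exact ⟨.cons e (hF.ends_of_residualArc he) p, by
      simp only [Walk.darts, List.mem_cons, forall_eq_or_imp]
      exact ⟨he, hp⟩⟩

variable [Fintype E]

noncomputable def excess (F : E → Option (V × V)) (x : V) : ℤ :=
  ∑ e, arcExcess (F e) x

lemma excess_update (F : E → Option (V × V)) (e : E) (o : Option (V × V)) (x : V) :
    excess (Function.update F e o) x = excess F x + arcExcess o x - arcExcess (F e) x := by
  simp only [excess]
  rw [← add_sum_erase _ _ (mem_univ e), ← add_sum_erase _ _ (mem_univ e),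
    sum_congr rfl fun e' he' => by rw [Function.update_of_ne (ne_of_mem_erase he')]]
  simp only [Function.update_self]
  ring

lemma card_filter_update_none_lt {e : E} (he : F e ≠ none) :
    #(univ.filter fun e' => Function.update F e none e' ≠ none) <
      #(univ.filter fun e' => F e' ≠ none) := by
  refine card_lt_card ⟨fun e' => ?_, fun h => ?_⟩
  · by_cases h : e' = e <;> simp [h]
  · simpa using h (by simpa using he : e ∈ univ.filter fun e' => F e' ≠ none)

lemma exists_eq_some_of_pos_excess {a : V} (h : 0 < excess F a) : ∃ e q, F e = some (a, q) := by
  by_contra hno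
  simp only [not_exists] at hno
  refine h.not_ge (sum_nonpos fun e _ => ?_)
  rcases hFe : F e with _ | ⟨p, q⟩
  · simp
  · have hp : a ≠ p := fun hap => hno e q (hap ▸ hFe)
    simp only [arcExcess, if_neg hp]
    split_ifs <;> norm_num

lemma IsFlow.exists_flip (hF : G.IsFlow F) {e : E} {a b : V} (h : G.ResidualArc F e a b) :
    ∃ F', G.IsFlow F' ∧ (∀ e' ≠ e, F' e' = F e') ∧
      ∀ x, excess F' x = excess F x + arcExcess (some (a, b)) x := by
  rcases h with ⟨hnone, hends⟩ | hsome
  · refine ⟨Function.update F e (some (a, b)), hF.update ?_,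
      fun e' he' => Function.update_of_ne he' _ _, fun x => ?_⟩
    · simp only [Option.some.injEq, Prod.mk.injEq]
      rintro p q ⟨rfl, rfl⟩
      exact hends
    · rw [excess_update, hnone, arcExcess_none, sub_zero]
  · refine ⟨Function.update F e none, hF.update (by simp),
      fun e' he' => Function.update_of_ne he' _ _, fun x => ?_⟩
    rw [excess_update, hsome, arcExcess_none, arcExcess_swap]
    ring

lemma IsFlow.exists_augment : ∀ {a c : V} {F : E → Option (V × V)}, G.IsFlow F →
    ∀ (p : G.Walk a c), (∀ d ∈ p.darts, G.ResidualArc F d.1 d.2.1 d.2.2) → p.edges.Nodup →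
    ∃ F', G.IsFlow F' ∧ ∀ x, excess F' x = excess F x + arcExcess (some (a, c)) x
  | _, _, F, hF, .nil _, _, _ => ⟨F, hF, fun x => by rw [arcExcess_self, add_zero]⟩
  | a, c, F, hF, .cons (v := b) e _ p, hres, hnd => by
    simp only [Walk.darts, List.mem_cons, forall_eq_or_imp] at hres
    rw [Walk.edges, List.nodup_cons] at hnd
    obtain ⟨F₁, hF₁, hagree, hexc₁⟩ := hF.exists_flip hres.1
    have hres₁ : ∀ d ∈ p.darts, G.ResidualArc F₁ d.1 d.2.1 d.2.2 := by
      intro d hd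
      have hde : d.1 ≠ e := fun h => hnd.1 (h ▸ by
        simpa [Walk.edges_eq_map_darts] using ⟨d.2.1, d.2.2, hd⟩)
      simpa [ResidualArc, hagree d.1 hde] using hres.2 d hd
    obtain ⟨F', hF', hexc'⟩ := hF₁.exists_augment p hres₁ hnd.2
    refine ⟨F', hF', fun x => ?_⟩
    rw [hexc', hexc₁, ← arcExcess_add_arcExcess a b c]
    ring

lemma IsFlow.exists_augment_of_reflTransGen (hF : G.IsFlow F) {a c : V}
    (h : Relation.ReflTransGen (G.ResidualAdj F) a c) :
    ∃ F', G.IsFlow F' ∧ ∀ x, excess F' x = excess F x + arcExcess (some (a, c)) x := by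
  obtain ⟨p, hp⟩ := hF.exists_walk_of_reflTransGen h
  obtain ⟨q, hq, hqp⟩ := p.exists_isPath_darts_subset
  exact hF.exists_augment q (fun d hd => hp d (hqp hd)) hq.edges_nodup

/-- When no residual arc leaves `S`, every edge of `δ(S)` carries flow out of `S`. -/
lemma IsFlow.card_cut_eq_sum_excess (hF : G.IsFlow F) {S : Finset V}
    (hS : ∀ x ∈ S, ∀ y, G.ResidualAdj F x y → y ∈ S) :
    (#(G.cut S) : ℤ) = ∑ x ∈ S, excess F x := by
  simp only [cut, card_filter, excess]
  rw [sum_comm]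
  push_cast
  refine sum_congr rfl fun e _ => ?_
  rcases hFe : F e with _ | ⟨p, q⟩
  · have : ¬G.Crosses S e := fun ⟨x, hx, y, hy, h⟩ => hy (hS x hx y ⟨e, .inl ⟨hFe, h⟩⟩)
    simp [this]
  · have hqp : q ∈ S → p ∈ S := fun hq => hS q hq p ⟨e, .inr hFe⟩
    rw [sum_arcExcess, crosses_iff (hF e p q hFe)]
    by_cases hp : p ∈ S <;> by_cases hq : q ∈ S <;> simp_all

lemma IsFlow.exists_walk {v : V} {F : E → Option (V × V)} (hF : G.IsFlow F)
    (hnn : ∀ x ≠ v, 0 ≤ excess F x) (a : V) (ha : a ≠ v → 0 < excess F a) :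
    ∃ W : G.Walk a v, (∀ e ∈ W.edges, F e ≠ none) ∧
      ∀ x, excess (fun e => if e ∈ W.edges then none else F e) x =
        excess F x - arcExcess (some (a, v)) x := by
  by_cases hav : a = v
  · subst hav
    exact ⟨.nil a, by simp [Walk.edges], fun x => by simp [Walk.edges, arcExcess_self]⟩
  obtain ⟨e, q, hFe⟩ := exists_eq_some_of_pos_excess (ha hav)
  set F₁ := Function.update F e none
  have hexc₁ : ∀ x, excess F₁ x = excess F x - arcExcess (some (a, q)) x := fun x => by
    rw [excess_update, hFe, arcExcess_none]
    ring
  obtain ⟨hnn₁, hq₁⟩ := nonneg_sub_arcExcess hnn (ha hav) (q := q)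
  simp only [← hexc₁] at hnn₁ hq₁
  have := card_filter_update_none_lt (F := F) (e := e) (by simp [hFe])
  obtain ⟨W, hWF, hWexc⟩ := (hF.update (by simp)).exists_walk hnn₁ q hq₁
  have hrestrict : (fun e' => if e' ∈ (Walk.cons e (hF e a q hFe) W).edges then none else F e') =
      fun e' => if e' ∈ W.edges then none else F₁ e' := by
    funext e'
    by_cases h : e' = e <;> simp [Walk.edges, F₁, h]
  refine ⟨.cons e (hF e a q hFe) W, fun e' he' => ?_, fun x => ?_⟩
  · rcases List.mem_cons.1 he' with rfl | he'
    · simp [hFe]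
    · by_cases h : e' = e
      · simp [h, hFe]
      · simpa [F₁, Function.update_of_ne h] using hWF e' he'
  · rw [hrestrict, hWexc, hexc₁, ← arcExcess_add_arcExcess a q v]
    ring
termination_by #(univ.filter fun e => F e ≠ none)

lemma IsFlow.exists_disjoint_walks {u v : V} :
    ∀ (j : ℕ) {F : E → Option (V × V)}, G.IsFlow F →
      (∀ x, excess F x = j * arcExcess (some (u, v)) x) →
      ∃ f : Fin j → G.Walk u v, (∀ i, ∀ e ∈ (f i).edges, F e ≠ none) ∧
        ∀ i i', i ≠ i' → ∀ e, e ∈ (f i).edges → e ∉ (f i').edges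
  | 0, _, _, _ => ⟨Fin.elim0, fun i => i.elim0, fun i => i.elim0⟩
  | j + 1, F, hF, hexc => by
    have hnn : ∀ x ≠ v, 0 ≤ excess F x := fun x hx => by
      rw [hexc]
      simp only [arcExcess, if_neg hx]
      split_ifs <;> positivity
    have hu : u ≠ v → 0 < excess F u := fun huv => by
      rw [hexc]
      simp only [arcExcess, if_neg huv]
      push_cast
      omega
    obtain ⟨W, hWF, hWexc⟩ := hF.exists_walk hnn u hu
    have hF' : G.IsFlow fun e => if e ∈ W.edges then none else F e := fun e p q h => by
      dsimp only at h
      split_ifs at h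
      exact hF e p q h
    obtain ⟨f, hfF, hfdisj⟩ := hF'.exists_disjoint_walks j fun x => by
      rw [hWexc, hexc]
      push_cast
      ring
    have hfW : ∀ i, ∀ e ∈ (f i).edges, e ∉ W.edges := fun i e he hW => hfF i e he (by simp [hW])
    refine ⟨Fin.cons W f, fun i => ?_, fun i i' hii' => ?_⟩
    · refine Fin.cases hWF (fun i e he => ?_) i
      have := hfF i e he
      by_cases hW : e ∈ W.edges <;> simp_all
    · induction i using Fin.cases <;> induction i' using Fin.cases
      · exact absurd rfl hii'
      · exact fun e he he' => hfW _ e he' he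
      · exact fun e he => hfW _ e he
      · exact hfdisj _ _ fun h => hii' (congrArg Fin.succ h)

variable [Fintype V]

lemma exists_flow_of_le_card_cut {k : ℕ} {u v : V}
    (hcut : ∀ S : Finset V, u ∈ S → v ∉ S → k ≤ #(G.cut S)) :
    ∀ j ≤ k, ∃ F, G.IsFlow F ∧ ∀ x, excess F x = j * arcExcess (some (u, v)) x
  | 0, _ => ⟨fun _ => none, fun _ _ _ h => by simp at h, fun x => by simp [excess]⟩
  | j + 1, hj => by
    obtain ⟨F, hF, hexc⟩ := exists_flow_of_le_card_cut hcut j (by omega)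
    have hreach : Relation.ReflTransGen (G.ResidualAdj F) u v := by
      by_contra hv
      set S := univ.filter (Relation.ReflTransGen (G.ResidualAdj F) u)
      have hclosed : ∀ x ∈ S, ∀ y, G.ResidualAdj F x y → y ∈ S := fun x hx y hxy => by
        simp only [S, mem_filter, mem_univ, true_and] at hx ⊢
        exact hx.tail hxy
      have hu : u ∈ S := by simp [S, Relation.ReflTransGen.refl]
      have hvS : v ∉ S := by simpa [S] using hv
      have hval := hF.card_cut_eq_sum_excess hclosed
      simp only [hexc, ← mul_sum, sum_arcExcess, if_pos hu, if_neg hvS] at hval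
      have := hcut S hu hvS
      omega
    obtain ⟨F', hF', hexc'⟩ := hF.exists_augment_of_reflTransGen hreach
    exact ⟨F', hF', fun x => by rw [hexc', hexc]; push_cast; ring⟩

/-- **Menger's theorem**, edge version. -/
theorem hasEdgeDisjointPaths_of_le_card_cut {k : ℕ} {u v : V}
    (hcut : ∀ S : Finset V, u ∈ S → v ∉ S → k ≤ #(G.cut S)) : G.HasEdgeDisjointPaths k u v := by
  obtain ⟨F, hF, hexc⟩ := exists_flow_of_le_card_cut hcut k le_rfl
  obtain ⟨f, -, hf⟩ := hF.exists_disjoint_walks k hexc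
  exact hasEdgeDisjointPaths_of_walks f hf

end Flow

section Tight

variable {k : ℕ}

lemma EdgeMinimal.isEmpty_of_zero (hG : G.EdgeMinimal 0) : IsEmpty E :=
  ⟨fun e => hG.2 e ⟨hG.1.1, fun _ _ _ => ⟨Fin.elim0, fun i => i.elim0, fun i => i.elim0⟩⟩⟩

lemma EdgeConnected.nonempty_of_pos (hG : G.EdgeConnected k) (hk : 0 < k) : Nonempty E := by
  obtain ⟨u, v, huv⟩ := hG.1
  obtain ⟨f, -, -⟩ := hG.2 u v huv
  cases f ⟨0, hk⟩ with
  | nil => exact absurd rfl huv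
  | cons e _ _ => exact ⟨e⟩

variable [Fintype E]

lemma EdgeConnected.exists_ssubset_card_cut_eq (hG : G.EdgeConnected k) {S T : Finset V}
    (hS : #(G.cut S) = k) (hT : #(G.cut T) = k) {a b : V} (haS : a ∈ S) (haT : a ∈ T)
    (hbS : b ∈ S) (hbT : b ∉ T) :
    ∃ S' ⊂ S, S'.Nonempty ∧ #(G.cut S') = k := by
  by_cases hTS : T ⊆ S
  · exact ⟨T, ssubset_of_subset_of_ne hTS (by rintro rfl; exact hbT hbS), ⟨a, haT⟩, hT⟩
  obtain ⟨z, hzT, hzS⟩ := not_subset.1 hTS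
  have h₁ : k ≤ #(G.cut (S \ T)) := hG.le_card_cut (mem_sdiff.2 ⟨hbS, hbT⟩) (y := a) (by simp [haT])
  have h₂ : k ≤ #(G.cut (T \ S)) := hG.le_card_cut (mem_sdiff.2 ⟨hzT, hzS⟩) (y := b) (by simp [hbS])
  have := G.card_cut_sdiff_add_card_cut_sdiff_le S T
  refine ⟨S \ T, ssubset_of_subset_of_ne sdiff_subset fun h => ?_, ⟨b, by simp [hbS, hbT]⟩, by omega⟩
  exact (mem_sdiff.1 (h ▸ haS)).2 haT

variable [Fintype V]

lemma EdgeMinimal.exists_mem_cut_card_eq (hG : G.EdgeMinimal k) (e : E) :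
    ∃ S : Finset V, e ∈ G.cut S ∧ #(G.cut S) = k := by
  obtain ⟨u, v, huv, hnot⟩ : ∃ u v : V, u ≠ v ∧ ¬(G.deleteEdge e).HasEdgeDisjointPaths k u v := by
    simpa [EdgeConnected, hG.1.1] using hG.2 e
  obtain ⟨S, hu, hv, hlt⟩ : ∃ S : Finset V, u ∈ S ∧ v ∉ S ∧ #((G.deleteEdge e).cut S) < k := by
    by_contra! h
    exact hnot (hasEdgeDisjointPaths_of_le_card_cut h)
  have hle := hG.1.le_card_cut hu hv
  rw [card_cut_deleteEdge] at hlt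
  have heS : e ∈ G.cut S := by
    by_contra heS
    rw [erase_eq_of_notMem heS] at hlt
    omega
  rw [card_erase_of_mem heS] at hlt
  exact ⟨S, heS, by omega⟩

lemma EdgeMinimal.ends_ne_diag (hG : G.EdgeMinimal k) (e : E) (x : V) : G.ends e ≠ s(x, x) := by
  intro h
  obtain ⟨S, heS, -⟩ := hG.exists_mem_cut_card_eq e
  exact (crosses_iff h).1 (mem_cut.1 heS) Iff.rfl

lemma EdgeConnected.exists_ends_mem_of_card_cut_eq (hG : G.EdgeConnected k) (hk : 0 < k)
    {S : Finset V} (hS : #(G.cut S) = k) {x y : V} (hx : x ∈ S) (hy : y ∈ S) (hxy : x ≠ y) :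
    ∃ e a b, G.ends e = s(a, b) ∧ a ∈ S ∧ b ∈ S := by
  by_contra! hno
  obtain ⟨f, hf, hdisj⟩ := hG.2 x y hxy
  have := mul_le_card_cut (n := 2) hdisj fun i => (hf i).one_lt_card_edges_inter_cut hx hy hxy hno
  omega

lemma EdgeMinimal.exists_ssubset_card_cut_eq (hG : G.EdgeMinimal k) (hk : 0 < k) {S : Finset V}
    (hS : #(G.cut S) = k) {x y : V} (hx : x ∈ S) (hy : y ∈ S) (hxy : x ≠ y) :
    ∃ T ⊂ S, T.Nonempty ∧ #(G.cut T) = k := by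
  obtain ⟨e, a, b, hab, ha, hb⟩ := hG.1.exists_ends_mem_of_card_cut_eq hk hS hx hy hxy
  obtain ⟨T, heT, hT⟩ := hG.exists_mem_cut_card_eq e
  rw [mem_cut, crosses_iff hab] at heT
  by_cases haT : a ∈ T
  · exact hG.1.exists_ssubset_card_cut_eq hS hT ha haT hb (by tauto)
  · exact hG.1.exists_ssubset_card_cut_eq hS hT hb (by tauto) ha haT

lemma EdgeMinimal.exists_mem_card_cut_singleton (hG : G.EdgeMinimal k) (hk : 0 < k)
    (S : Finset V) (hne : S.Nonempty) (hS : #(G.cut S) = k) : ∃ a ∈ S, #(G.cut {a}) = k := by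
  induction S using strongInduction with
  | H S ih =>
    obtain ⟨x, hx⟩ := hne
    by_cases hxy : ∃ y ∈ S, x ≠ y
    · obtain ⟨y, hy, hxy⟩ := hxy
      obtain ⟨T, hTS, hTne, hT⟩ := hG.exists_ssubset_card_cut_eq hk hS hx hy hxy
      obtain ⟨a, ha, hak⟩ := ih T hTS hTne hT
      exact ⟨a, hTS.subset ha, hak⟩
    · push Not at hxy
      have : S = {x} := eq_singleton_iff_unique_mem.2 ⟨hx, fun y hy => (hxy y hy).symm⟩
      exact ⟨x, hx, this ▸ hS⟩

end Tight

end Multigraph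

/-- Every edge-minimal, `k`-edge-connected multigraph has at
least two vertices of degree exactly `k`. -/
theorem edgeMinimal_two_vertices_of_degree_k {V E : Type} [Fintype V] [Fintype E]
    (G : Multigraph V E) (k : ℕ) (hG : G.EdgeMinimal k) :
    ∃ u v : V, u ≠ v ∧ G.degree u = k ∧ G.degree v = k := by
  have : Nontrivial V := ⟨hG.1.1⟩
  rcases Nat.eq_zero_or_pos k with rfl | hk
  · have := hG.isEmpty_of_zero
    obtain ⟨u, v, huv⟩ := exists_pair_ne V
    exact ⟨u, v, huv, by simp [Multigraph.degree], by simp [Multigraph.degree]⟩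
  obtain ⟨e⟩ := hG.1.nonempty_of_pos hk
  obtain ⟨S, heS, hS⟩ := hG.exists_mem_cut_card_eq e
  obtain ⟨x, hx, -⟩ := Multigraph.mem_cut.1 heS
  obtain ⟨a, -, ha⟩ := hG.exists_mem_card_cut_singleton hk S ⟨x, hx⟩ hS
  obtain ⟨c, hc⟩ := exists_ne a
  obtain ⟨b, hb, hb'⟩ := hG.exists_mem_card_cut_singleton hk {a}ᶜ ⟨c, by simpa using hc⟩
    (by rw [Multigraph.cut_compl, ha])
  refine ⟨a, b, fun h => by simp [h] at hb, ?_, ?_⟩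
  · rw [Multigraph.degree_eq_card_cut_singleton hG.ends_ne_diag, ha]
  · rw [Multigraph.degree_eq_card_cut_singleton hG.ends_ne_diag, hb']
end

section
/- Let G be an edge-minimal, k-edge-connected multigraph, let G^k be the quotient multigraph whose vertices are the equivalence classes of R^{k+1} on G (with one edge between classes for every edge of G joining them), and let v be a vertex of G^k (an equivalence class of R^{k+1}). Then for every vertex u of G belonging to the class v, the degree of v in G^k is at least the degree of u in G. -/
namespace Multigraph

variable {V E : Type}

/-- A multigraph has more than one vertex and exactly `k` pairwise edge-disjoint
paths (as a maximum) between any two distinct vertices. -/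
def ExactlyEdgeConnected (G : Multigraph V E) (k : ℕ) : Prop :=
  (∃ u v : V, u ≠ v) ∧ ∀ u v : V, u ≠ v →
    G.HasEdgeDisjointPaths k u v ∧ ¬ G.HasEdgeDisjointPaths (k + 1) u v

/-- The quotient multigraph `G^k`: its vertices are the equivalence classes of
`R^(k+1)` and it has one edge between classes `v₁` and `v₂` for every edge
`(u₁, u₂)` of `G` with `u₁ ∈ v₁` and `u₂ ∈ v₂`.  (Since `R^(k+1)` is an
equivalence relation, taking its equivalence closure does not change it.) -/
def quotientGraph (G : Multigraph V E) (k : ℕ) :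
    Multigraph (Quotient (Relation.EqvGen.setoid (G.Rel (k + 1)))) E :=
  ⟨fun e => (G.ends e).map (Quotient.mk (Relation.EqvGen.setoid (G.Rel (k + 1))))⟩

end Multigraph


open Classical in
lemma count_le_count_map {α β : Type*} (f : α → β) (m : Multiset α) (u : α) :
    m.count u ≤ (m.map f).count (f u) := by
  rw [Multiset.count_map, Multiset.count_eq_card_filter_eq]
  exact Multiset.card_le_card (Multiset.monotone_filter_right m (fun a h => by simp_all))

lemma toMset_map {α β : Type*} (f : α → β) (s : Sym2 α) :
    (s.map f).toMset = s.toMset.map f := by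
  induction s using Sym2.ind with
  | _ a b => simp [Sym2.toMset]

/-- Let `G` be an edge-minimal, `k`-edge-connected multigraph
and `v` a vertex of the quotient `G^k` (an equivalence class of `R^(k+1)`).
For every vertex `u` of `G` lying in the class `v`, the degree of `v` in
`G^k` is at least the degree of `u` in `G`. -/
theorem quotientGraph_degree_ge {V E : Type} [Fintype E] (G : Multigraph V E)
    (k : ℕ) (hG : G.EdgeMinimal k)
    (v : Quotient (Relation.EqvGen.setoid (G.Rel (k + 1)))) (u : V)
    (hu : Quotient.mk (Relation.EqvGen.setoid (G.Rel (k + 1))) u = v) :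
    G.degree u ≤ (G.quotientGraph k).degree v := by
  subst hu
  classical
  unfold Multigraph.degree Multigraph.quotientGraph
  refine Finset.sum_le_sum fun e _ => ?_
  simp only [toMset_map]
  exact count_le_count_map _ _ _
end
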